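/- In ℚ[[z]] one has (1 − 729·z) · I_{0,0}² · I_{1,1}² · I_{2,2} = 1; equivalently, log I_{0,0} + log I_{1,1} + (1/2)·log I_{2,2} = −(1/2)·log(1 − 3⁶·z). -/

import Mathlib

/-- `A_d(w) = (∏_{r=1}^{3d} (3w+r))² · ((∏_{r=1}^{d} (w+r))⁶)⁻¹ ∈ ℚ[[w]]`. -/
noncomputable def Acoef (d : ℕ) : PowerSeries ℚ :=
  (∏ r ∈ Finset.Icc 1 (3 * d), (3 * PowerSeries.X + (r : PowerSeries ℚ))) ^ 2 *
    ((∏ r ∈ Finset.Icc 1 d, (PowerSeries.X + (r : PowerSeries ℚ))) ^ 6)⁻¹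

/-- `Ĩ_q ∈ ℚ[[z]]`: the coefficient of `z^d` is the coefficient of `w^q` in `A_d(w)`. -/
noncomputable def Itil (q : ℕ) : PowerSeries ℚ :=
  PowerSeries.mk fun d => PowerSeries.coeff q (Acoef d)

/-- `S = (ℚ[[z]])[t]`. -/
abbrev S : Type := Polynomial (PowerSeries ℚ)

/-- The operator `z·∂/∂z` on `ℚ[[z]]`. -/
noncomputable def zdz (f : PowerSeries ℚ) : PowerSeries ℚ :=
  PowerSeries.mk fun n => (n : ℚ) * PowerSeries.coeff n f

/-- The derivation `δ = ∂/∂t + z·∂/∂z` on `S = (ℚ[[z]])[t]`, determined by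
`δ(t) = 1` and `δ(z) = z`. -/
noncomputable def deltaOp (p : S) : S :=
  Polynomial.derivative p + p.sum fun n a => Polynomial.C (zdz a) * Polynomial.X ^ n

/-- `I_{0,q} = Σ_{k=0}^{q} (t^k/k!)·Ĩ_{q−k} ∈ S`. -/
noncomputable def I0S (q : ℕ) : S :=
  ∑ k ∈ Finset.range (q + 1),
    Polynomial.C (PowerSeries.C (1 / (k.factorial : ℚ)) * Itil (q - k)) * Polynomial.X ^ k

/-- The recursion `I_{p,q} = δ(I_{p−1,q} · I_{p−1,p−1}⁻¹)`, where the inverse of the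
(constant, unit) polynomial `I_{p−1,p−1}` is taken via the power series inverse of its
constant coefficient. -/
noncomputable def IPQ : ℕ → ℕ → S
  | 0 => I0S
  | p + 1 => fun q => deltaOp (IPQ p q * Polynomial.C (((IPQ p p).coeff 0)⁻¹))

/-!
With `t = log z`, the series `I_{0,q}` are the Frobenius solutions of the Picard–Fuchs operator
`θ⁴ - 9z(3θ+1)²(3θ+2)²`, as the recurrence `(w+d+1)⁴ A_{d+1} = 9(3w+3d+1)²(3w+3d+2)² A_d` shows.
Dividing successively by `I_{0,0}` and `I_{1,1}` and differentiating factors the Wronskian `W` of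
the first three solutions as `I_{0,0}³ I_{1,1}² I_{2,2}`. A direct computation shows that
`(1 - 729z) W` is again annihilated by the operator; power-series solutions are determined by
their constant term, so `(1 - 729z) W = I_{0,0}`.
-/

open PowerSeries

local notation "θ" => zdz

theorem coeff_zdz (n : ℕ) (f : ℚ⟦X⟧) : coeff n (θ f) = n * coeff n f :=
  coeff_mk _ _

theorem zdz_eq_X_mul_derivative (f : ℚ⟦X⟧) : θ f = X * d⁄dX ℚ f := by
  ext (_ | n)
  · simp [coeff_zdz]
  · rw [coeff_zdz, coeff_succ_X_mul, coeff_derivative]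
    push_cast
    ring

@[simp] theorem zdz_add (f g : ℚ⟦X⟧) : θ (f + g) = θ f + θ g := by
  simp only [zdz_eq_X_mul_derivative, map_add, mul_add]

@[simp] theorem zdz_sub (f g : ℚ⟦X⟧) : θ (f - g) = θ f - θ g := by
  simp only [zdz_eq_X_mul_derivative, map_sub, mul_sub]

@[simp] theorem zdz_mul (f g : ℚ⟦X⟧) : θ (f * g) = θ f * g + f * θ g := by
  simp only [zdz_eq_X_mul_derivative, Derivation.leibniz, smul_eq_mul]
  ring

@[simp] theorem zdz_C (r : ℚ) : θ (C r) = 0 := by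
  simp [zdz_eq_X_mul_derivative]

@[simp] theorem zdz_zero : θ 0 = 0 := by
  simpa using zdz_C 0

@[simp] theorem zdz_one : θ 1 = 0 := by
  simpa using zdz_C 1

@[simp] theorem zdz_ofNat (n : ℕ) [n.AtLeastTwo] : θ (no_index (OfNat.ofNat n) : ℚ⟦X⟧) = 0 := by
  rw [← map_ofNat C n]
  exact zdz_C _

@[simp] theorem zdz_X : θ (X : ℚ⟦X⟧) = X := by
  simp [zdz_eq_X_mul_derivative]

@[simp] theorem constantCoeff_zdz (f : ℚ⟦X⟧) : constantCoeff (θ f) = 0 := by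
  simp [zdz_eq_X_mul_derivative]

theorem coeff_iterate_zdz (k n : ℕ) (f : ℚ⟦X⟧) : coeff n (θ^[k] f) = n ^ k * coeff n f := by
  induction k with
  | zero => simp
  | succ k ih => rw [Function.iterate_succ_apply', coeff_zdz, ih, pow_succ]; ring

theorem constantCoeff_prod_X_add_ne_zero (d : ℕ) :
    constantCoeff (∏ r ∈ Finset.Icc 1 d, (X + (r : ℚ⟦X⟧))) ≠ 0 := by
  rw [map_prod, Finset.prod_ne_zero_iff]
  intro r hr
  have := (Finset.mem_Icc.mp hr).1
  simpa using Nat.one_le_iff_ne_zero.mp this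

theorem Acoef_mul_prod_pow (d : ℕ) :
    Acoef d * (∏ r ∈ Finset.Icc 1 d, (X + (r : ℚ⟦X⟧))) ^ 6 =
      (∏ r ∈ Finset.Icc 1 (3 * d), (3 * X + (r : ℚ⟦X⟧))) ^ 2 := by
  rw [Acoef, mul_assoc, PowerSeries.inv_mul_cancel _ (by
    rw [map_pow]; exact pow_ne_zero _ (constantCoeff_prod_X_add_ne_zero d)), mul_one]

@[simp] theorem Acoef_zero : Acoef 0 = 1 := by
  simpa using Acoef_mul_prod_pow 0

theorem Acoef_succ (d : ℕ) :
    (X + (d : ℚ⟦X⟧) + 1) ^ 4 * Acoef (d + 1) =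
      9 * (3 * (X + (d : ℚ⟦X⟧)) + 1) ^ 2 * (3 * (X + (d : ℚ⟦X⟧)) + 2) ^ 2 * Acoef d := by
  have hD : (∏ r ∈ Finset.Icc 1 (d + 1), (X + (r : ℚ⟦X⟧))) ^ 6 ≠ 0 :=
    pow_ne_zero 6 fun h => constantCoeff_prod_X_add_ne_zero (d + 1) (by rw [h, map_zero])
  refine mul_right_cancel₀ hD ?_
  have hN : 3 * (d + 1) = 3 * d + 1 + 1 + 1 := by ring
  rw [mul_assoc, Acoef_mul_prod_pow, hN, Finset.prod_Icc_succ_top (by omega),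
    Finset.prod_Icc_succ_top (by omega), Finset.prod_Icc_succ_top (by omega),
    Finset.prod_Icc_succ_top (by omega)]
  push_cast
  linear_combination (-9 * (3 * (X + (d : ℚ⟦X⟧)) + 1) ^ 2 * (3 * (X + (d : ℚ⟦X⟧)) + 2) ^ 2 *
    (X + (d : ℚ⟦X⟧) + 1) ^ 6) * Acoef_mul_prod_pow d

@[simp] theorem coeff_natCast_mul (m n : ℕ) (f : ℚ⟦X⟧) :
    coeff n ((m : ℚ⟦X⟧) * f) = m * coeff n f := by
  rw [← map_natCast C m, coeff_C_mul]

@[simp] theorem coeff_ofNat_mul (m n : ℕ) [m.AtLeastTwo] (f : ℚ⟦X⟧) :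
    coeff n ((no_index (OfNat.ofNat m) : ℚ⟦X⟧) * f) = OfNat.ofNat m * coeff n f := by
  rw [← map_ofNat C m, coeff_C_mul]

/-- The `z^d`-coefficient is the `w^q`-coefficient of `(w + d)^k A_d(w)`: this is `(θ + w)^k`
applied to `Σ_d A_d(w) z^d`, or equivalently `δ^k I_{0,q}` at `t = 0`. -/
noncomputable def frobIter (q k : ℕ) : ℚ⟦X⟧ :=
  mk fun d => coeff q ((X + (d : ℚ⟦X⟧)) ^ k * Acoef d)

theorem frobIter_zero_right (q : ℕ) : frobIter q 0 = Itil q := by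
  simp [frobIter, Itil]

theorem zdz_frobIter_zero (k : ℕ) : θ (frobIter 0 k) = frobIter 0 (k + 1) := by
  ext d
  simp [frobIter, coeff_zdz, pow_succ', add_mul, mul_assoc]

theorem zdz_frobIter_succ (q k : ℕ) :
    θ (frobIter (q + 1) k) = frobIter (q + 1) (k + 1) - frobIter q k := by
  ext d
  simp [frobIter, coeff_zdz, pow_succ', add_mul, mul_assoc, coeff_succ_X_mul]

theorem frobIter_zero_succ (k : ℕ) : frobIter 0 (k + 1) = θ (frobIter 0 k) :=
  (zdz_frobIter_zero k).symm

theorem frobIter_succ_succ (q k : ℕ) :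
    frobIter (q + 1) (k + 1) = θ (frobIter (q + 1) k) + frobIter q k := by
  rw [zdz_frobIter_succ, sub_add_cancel]

theorem constantCoeff_frobIter (q k : ℕ) :
    constantCoeff (frobIter q k) = if q = k then 1 else 0 := by
  simp [frobIter, ← coeff_zero_eq_constantCoeff_apply, coeff_X_pow]

theorem coeff_succ_one_sub_729_X_mul (n : ℕ) (f : ℚ⟦X⟧) :
    coeff (n + 1) ((1 - 729 * X) * f) = coeff (n + 1) f - 729 * coeff n f := by
  rw [sub_mul, one_mul, mul_assoc, map_sub, coeff_ofNat_mul, coeff_succ_X_mul]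

theorem one_sub_mul_frobIter_four {q : ℕ} (hq : q < 4) :
    (1 - 729 * X) * frobIter q 4 =
      X * (1458 * frobIter q 3 + 1053 * frobIter q 2 + 324 * frobIter q 1 + 36 * frobIter q 0) := by
  ext (_ | d)
  · simp [coeff_zero_eq_constantCoeff_apply, constantCoeff_frobIter, hq.ne]
  · rw [coeff_succ_one_sub_729_X_mul, coeff_succ_X_mul]
    simp only [map_add, coeff_ofNat_mul, frobIter, coeff_mk]
    push_cast
    rw [← add_assoc, Acoef_succ]
    generalize X + (d : ℚ⟦X⟧) = y
    have hexpand : 9 * (3 * y + 1) ^ 2 * (3 * y + 2) ^ 2 * Acoef d = 729 * (y ^ 4 * Acoef d) +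
        1458 * (y ^ 3 * Acoef d) + 1053 * (y ^ 2 * Acoef d) + 324 * (y ^ 1 * Acoef d) +
        36 * (y ^ 0 * Acoef d) := by
      ring
    rw [hexpand]
    simp only [map_add, coeff_ofNat_mul]
    ring

/-- The minor on the columns `i, j, k` of the matrix `(frobIter q k)_{q ≤ 2}`. -/
noncomputable def wronskian (i j k : ℕ) : ℚ⟦X⟧ :=
  frobIter 0 i * (frobIter 1 j * frobIter 2 k - frobIter 1 k * frobIter 2 j) -
    frobIter 1 i * (frobIter 0 j * frobIter 2 k - frobIter 0 k * frobIter 2 j) +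
    frobIter 2 i * (frobIter 0 j * frobIter 1 k - frobIter 0 k * frobIter 1 j)

@[simp] theorem wronskian_self_left (i k : ℕ) : wronskian i i k = 0 := by
  unfold wronskian; ring

@[simp] theorem wronskian_self_right (i j : ℕ) : wronskian i j j = 0 := by
  unfold wronskian; ring

@[simp] theorem wronskian_self_left_right (i j : ℕ) : wronskian i j i = 0 := by
  unfold wronskian; ring

theorem wronskian_swap_right (i j k : ℕ) : wronskian i k j = -wronskian i j k := by
  unfold wronskian; ring

theorem wronskian_rotate (i j k : ℕ) : wronskian j k i = wronskian i j k := by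
  unfold wronskian; ring

/-- `θ` acts on each column as `k ↦ k + 1` plus a nilpotent (trace-zero) shift of the rows,
and the shift does not contribute to the derivative of the determinant. -/
theorem zdz_wronskian (i j k : ℕ) :
    θ (wronskian i j k) =
      wronskian (i + 1) j k + wronskian i (j + 1) k + wronskian i j (k + 1) := by
  simp only [wronskian, zdz_add, zdz_sub, zdz_mul, zdz_frobIter_zero, zdz_frobIter_succ]
  ring

theorem one_sub_mul_wronskian_four (i j : ℕ) :
    (1 - 729 * X) * wronskian i j 4 = X * (1458 * wronskian i j 3 + 1053 * wronskian i j 2 +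
      324 * wronskian i j 1 + 36 * wronskian i j 0) := by
  unfold wronskian
  linear_combination
    (frobIter 1 i * frobIter 2 j - frobIter 2 i * frobIter 1 j) *
      one_sub_mul_frobIter_four (q := 0) (by norm_num) +
    (frobIter 2 i * frobIter 0 j - frobIter 0 i * frobIter 2 j) *
      one_sub_mul_frobIter_four (q := 1) (by norm_num) +
    (frobIter 0 i * frobIter 1 j - frobIter 1 i * frobIter 0 j) *
      one_sub_mul_frobIter_four (q := 2) (by norm_num)

/-- The Picard–Fuchs operator `θ⁴ - 9 z (3θ + 1)² (3θ + 2)²` of the family, in expanded form. -/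
noncomputable def picardFuchs (f : ℚ⟦X⟧) : ℚ⟦X⟧ :=
  (1 - 729 * X) * θ^[4] f - X * (1458 * θ^[3] f + 1053 * θ^[2] f + 324 * θ f + 36 * f)

theorem coeff_succ_picardFuchs (n : ℕ) (f : ℚ⟦X⟧) :
    coeff (n + 1) (picardFuchs f) =
      (n + 1) ^ 4 * coeff (n + 1) f - 9 * (3 * n + 1) ^ 2 * (3 * n + 2) ^ 2 * coeff n f := by
  simp only [picardFuchs, map_sub, map_add, coeff_succ_one_sub_729_X_mul, coeff_succ_X_mul,
    coeff_ofNat_mul, coeff_iterate_zdz, coeff_zdz]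
  push_cast
  ring

theorem eq_of_picardFuchs_eq_zero {f g : ℚ⟦X⟧} (hf : picardFuchs f = 0) (hg : picardFuchs g = 0)
    (h0 : constantCoeff f = constantCoeff g) : f = g := by
  ext n
  induction n with
  | zero => simpa using h0
  | succ n ih =>
    have hf' := congrArg (coeff (n + 1)) hf
    have hg' := congrArg (coeff (n + 1)) hg
    rw [coeff_succ_picardFuchs, map_zero] at hf' hg'
    refine mul_left_cancel₀ (pow_ne_zero 4 (Nat.cast_add_one_ne_zero n)) ?_
    linear_combination hf' - hg' + 9 * (3 * (n : ℚ) + 1) ^ 2 * (3 * (n : ℚ) + 2) ^ 2 * ih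

theorem iterate_zdz_Itil_zero (k : ℕ) : θ^[k] (Itil 0) = frobIter 0 k := by
  induction k with
  | zero => exact (frobIter_zero_right 0).symm
  | succ k ih => rw [Function.iterate_succ_apply', ih, zdz_frobIter_zero]

theorem picardFuchs_Itil_zero : picardFuchs (Itil 0) = 0 := by
  rw [picardFuchs, iterate_zdz_Itil_zero, iterate_zdz_Itil_zero, iterate_zdz_Itil_zero,
    ← Function.iterate_one θ, iterate_zdz_Itil_zero, ← frobIter_zero_right]
  linear_combination one_sub_mul_frobIter_four (q := 0) (by norm_num)

theorem picardFuchs_one_sub_mul_wronskian : picardFuchs ((1 - 729 * X) * wronskian 0 1 2) = 0 := by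
  have r014 := one_sub_mul_wronskian_four 0 1
  have r024 := one_sub_mul_wronskian_four 0 2
  have r124 := one_sub_mul_wronskian_four 1 2
  rw [wronskian_swap_right 0 1 2] at r024
  rw [wronskian_rotate 0 1 2] at r124
  simp only [wronskian_self_right, wronskian_self_left_right] at r014 r024 r124
  set T := (1 - 729 * X) * wronskian 0 1 2 with hT
  have h1 : θ T = (1 - 729 * X) * wronskian 0 1 3 - 729 * X * wronskian 0 1 2 := by
    simp only [hT, zdz_sub, zdz_mul, zdz_one, zdz_ofNat, zdz_X, zdz_wronskian, Nat.reduceAdd,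
      wronskian_self_left, wronskian_self_right]
    ring
  have h2 : θ (θ T) = (1 - 729 * X) * wronskian 0 2 3 + 324 * X * wronskian 0 1 2 := by
    simp only [h1, zdz_sub, zdz_mul, zdz_one, zdz_ofNat, zdz_X, zdz_wronskian, Nat.reduceAdd,
      wronskian_self_left, wronskian_self_right]
    linear_combination r014
  have h3 : θ (θ (θ T)) = (1 - 729 * X) * wronskian 1 2 3 + 729 * X * wronskian 0 2 3 +
      324 * X * wronskian 0 1 3 := by
    simp only [h2, zdz_add, zdz_mul, zdz_sub, zdz_one, zdz_ofNat, zdz_X, zdz_wronskian,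
      Nat.reduceAdd, wronskian_self_left, wronskian_self_right]
    linear_combination r024
  have h4 : θ (θ (θ (θ T))) = (1 - 729 * X) * wronskian 1 2 4 + 1053 * X * wronskian 0 2 3 +
      324 * X * wronskian 0 1 3 + 324 * X * wronskian 0 1 4 + 729 * X * wronskian 0 2 4 := by
    simp only [h3, zdz_add, zdz_mul, zdz_sub, zdz_one, zdz_ofNat, zdz_X, zdz_wronskian,
      Nat.reduceAdd, wronskian_self_left, wronskian_self_right]
    ring
  simp only [picardFuchs, Function.iterate_succ_apply', Function.iterate_zero_apply]
  rw [h4, h3, h2, h1]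
  linear_combination (324 * X) * r014 + (729 * X) * r024 + (1 - 729 * X) * r124

theorem constantCoeff_Itil_zero : constantCoeff (Itil 0) = 1 := by
  simpa [frobIter_zero_right] using constantCoeff_frobIter 0 0

theorem one_sub_mul_wronskian_zero_one_two : (1 - 729 * X) * wronskian 0 1 2 = Itil 0 :=
  eq_of_picardFuchs_eq_zero picardFuchs_one_sub_mul_wronskian picardFuchs_Itil_zero (by
    simp [wronskian, constantCoeff_frobIter, constantCoeff_Itil_zero])

noncomputable def I₁₁ : ℚ⟦X⟧ := 1 + θ (Itil 1 * (Itil 0)⁻¹)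

noncomputable def I₂₂ : ℚ⟦X⟧ := 1 + θ ((Itil 1 * (Itil 0)⁻¹ + θ (Itil 2 * (Itil 0)⁻¹)) * I₁₁⁻¹)

theorem Itil_zero_mul_inv : Itil 0 * (Itil 0)⁻¹ = 1 :=
  PowerSeries.mul_inv_cancel _ (by simp [constantCoeff_Itil_zero])

theorem I₁₁_mul_inv : I₁₁ * I₁₁⁻¹ = 1 :=
  PowerSeries.mul_inv_cancel _ (by simp [I₁₁])

theorem wronskian_zero_one_two_eq : wronskian 0 1 2 = Itil 0 ^ 3 * (I₁₁ ^ 2 * I₂₂) := by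
  rw [I₂₂]
  set u₁ := Itil 1 * (Itil 0)⁻¹ with hu₁
  set u₂ := Itil 2 * (Itil 0)⁻¹ with hu₂
  set c := (u₁ + θ u₂) * I₁₁⁻¹ with hc_def
  have h₁ : Itil 1 = Itil 0 * u₁ := by rw [hu₁, mul_left_comm, Itil_zero_mul_inv, mul_one]
  have h₂ : Itil 2 = Itil 0 * u₂ := by rw [hu₂, mul_left_comm, Itil_zero_mul_inv, mul_one]
  have hc : I₁₁ * c = u₁ + θ u₂ := by rw [hc_def, mul_left_comm, I₁₁_mul_inv, mul_one]
  have hc' := congrArg θ hc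
  have hI₁₁ : I₁₁ = 1 + θ u₁ := rfl
  rw [hI₁₁] at hc hc' ⊢
  simp only [zdz_mul, zdz_add, zdz_one, zero_add] at hc'
  simp only [wronskian, frobIter_succ_succ, frobIter_zero_succ, frobIter_zero_right, h₁, h₂,
    zdz_mul, zdz_add]
  linear_combination (-(Itil 0) ^ 3) * ((1 + θ u₁) * hc' - θ (θ u₁) * hc)

theorem one_sub_mul_Itil_zero_sq_mul_I₁₁_sq_mul_I₂₂ :
    (1 - 729 * X) * Itil 0 ^ 2 * I₁₁ ^ 2 * I₂₂ = 1 := by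
  have hI₀ : Itil 0 ≠ 0 := fun h => by simpa [h] using constantCoeff_Itil_zero
  refine mul_left_cancel₀ hI₀ ?_
  have h := one_sub_mul_wronskian_zero_one_two
  rw [wronskian_zero_one_two_eq] at h
  linear_combination h

theorem deltaOp_add (p q : S) : deltaOp (p + q) = deltaOp p + deltaOp q := by
  rw [deltaOp, deltaOp, deltaOp, Polynomial.derivative_add,
    Polynomial.sum_add_index _ _ _ (by simp) (by simp [add_mul])]
  ring

theorem deltaOp_C_mul_X_pow (f : ℚ⟦X⟧) (n : ℕ) :
    deltaOp (Polynomial.C f * Polynomial.X ^ n) =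
      Polynomial.C (n * f) * Polynomial.X ^ (n - 1) + Polynomial.C (θ f) * Polynomial.X ^ n := by
  rw [deltaOp, Polynomial.C_mul_X_pow_eq_monomial, Polynomial.derivative_monomial,
    Polynomial.sum_monomial_index _ _ (by simp),
    ← Polynomial.C_mul_X_pow_eq_monomial, mul_comm f]

theorem deltaOp_quadratic (f g h : ℚ⟦X⟧) :
    deltaOp (Polynomial.C f + Polynomial.C g * Polynomial.X + Polynomial.C h * Polynomial.X ^ 2) =
      Polynomial.C (θ f + g) + Polynomial.C (θ g + 2 * h) * Polynomial.X +
        Polynomial.C (θ h) * Polynomial.X ^ 2 := by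
  have h₀ := deltaOp_C_mul_X_pow f 0
  have h₁ := deltaOp_C_mul_X_pow g 1
  have h₂ := deltaOp_C_mul_X_pow h 2
  simp only [pow_zero, mul_one, pow_one, Nat.cast_zero, zero_mul, map_zero, zero_add,
    Nat.cast_one, one_mul, Nat.cast_ofNat, tsub_self, Nat.add_one_sub_one] at h₀ h₁ h₂
  rw [deltaOp_add, deltaOp_add, h₀, h₁, h₂]
  simp only [map_add, map_mul]
  ring

theorem IPQ_succ (p q : ℕ) :
    IPQ (p + 1) q = deltaOp (IPQ p q * Polynomial.C ((IPQ p p).coeff 0)⁻¹) :=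
  rfl

theorem IPQ_zero_zero : IPQ 0 0 = Polynomial.C (Itil 0) := by
  simp [IPQ, I0S]

theorem I0S_one : I0S 1 = Polynomial.C (Itil 1) + Polynomial.C (Itil 0) * Polynomial.X := by
  simp [I0S, Finset.sum_range_succ]

theorem I0S_two : I0S 2 = Polynomial.C (Itil 2) + Polynomial.C (Itil 1) * Polynomial.X +
    Polynomial.C (C (1 / 2) * Itil 0) * Polynomial.X ^ 2 := by
  simp [I0S, Finset.sum_range_succ]

theorem C_Itil_zero_mul_C_inv : Polynomial.C (Itil 0) * Polynomial.C (Itil 0)⁻¹ = 1 := by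
  rw [← map_mul, Itil_zero_mul_inv, map_one]

theorem IPQ_one_one : IPQ 1 1 = Polynomial.C I₁₁ := by
  have h : I0S 1 * Polynomial.C (Itil 0)⁻¹ = Polynomial.C (Itil 1 * (Itil 0)⁻¹) +
      Polynomial.C 1 * Polynomial.X + Polynomial.C 0 * Polynomial.X ^ 2 := by
    rw [I0S_one]
    simp only [map_mul, map_one, map_zero]
    linear_combination Polynomial.X * C_Itil_zero_mul_C_inv
  rw [IPQ_succ, IPQ_zero_zero, Polynomial.coeff_C_zero, IPQ, h, deltaOp_quadratic]
  simp only [zdz_one, zdz_zero, mul_zero, add_zero, map_zero, zero_mul]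
  rw [I₁₁, add_comm]

theorem IPQ_one_two : IPQ 1 2 = Polynomial.C (Itil 1 * (Itil 0)⁻¹ + θ (Itil 2 * (Itil 0)⁻¹)) +
    Polynomial.C I₁₁ * Polynomial.X := by
  have h : I0S 2 * Polynomial.C (Itil 0)⁻¹ = Polynomial.C (Itil 2 * (Itil 0)⁻¹) +
      Polynomial.C (Itil 1 * (Itil 0)⁻¹) * Polynomial.X +
        Polynomial.C (C (1 / 2)) * Polynomial.X ^ 2 := by
    rw [I0S_two]
    simp only [map_mul]
    linear_combination Polynomial.C (C (1 / 2)) * Polynomial.X ^ 2 * C_Itil_zero_mul_C_inv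
  have h2 : (2 : ℚ⟦X⟧) * C (1 / 2) = 1 := by
    rw [← map_ofNat C 2, ← map_mul]
    norm_num
  rw [IPQ_succ, IPQ_zero_zero, Polynomial.coeff_C_zero, IPQ, h, deltaOp_quadratic, h2, zdz_C,
    map_zero, zero_mul, add_zero, I₁₁, add_comm 1, add_comm (θ _)]

theorem IPQ_two_two : IPQ 2 2 = Polynomial.C I₂₂ := by
  have h : IPQ 1 2 * Polynomial.C ((IPQ 1 1).coeff 0)⁻¹ =
      Polynomial.C ((Itil 1 * (Itil 0)⁻¹ + θ (Itil 2 * (Itil 0)⁻¹)) * I₁₁⁻¹) +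
        Polynomial.C 1 * Polynomial.X + Polynomial.C 0 * Polynomial.X ^ 2 := by
    rw [IPQ_one_two, IPQ_one_one, Polynomial.coeff_C_zero, ← I₁₁_mul_inv]
    simp only [map_mul, map_zero]
    ring
  rw [IPQ_succ, h, deltaOp_quadratic]
  simp only [zdz_one, zdz_zero, mul_zero, add_zero, map_zero, zero_mul]
  rw [I₂₂, add_comm]

/-- The identity `(1 − 729·z)·I_{0,0}²·I_{1,1}²·I_{2,2} = 1`; equivalently
`log I_{0,0} + log I_{1,1} + (1/2)·log I_{2,2} = −(1/2)·log(1 − 3⁶·z)`. -/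
theorem IPQ_squared_product_identity :
    (1 - 729 * Polynomial.C (PowerSeries.X : PowerSeries ℚ)) *
      (IPQ 0 0) ^ 2 * (IPQ 1 1) ^ 2 * IPQ 2 2 = 1 := by
  rw [IPQ_zero_zero, IPQ_one_one, IPQ_two_two]
  simpa [map_ofNat] using congrArg Polynomial.C one_sub_mul_Itil_zero_sq_mul_I₁₁_sq_mul_I₂₂
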